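/- For an indexed tree T with support equal to {1,...,n-1}, the forest polynomial β_T equals the sum over decreasing labelings ℓ of T (read in inorder as a permutation of S_{n-1}) of the monomial ∏_{i=1}^{n-1} x_{c_i + 1}, where (c_1,...,c_{n-1}) is the Lehmer code of ℓ^{-1}. -/

import Mathlib

/-!
Both sides satisfy the same recursion over the nodes of `T` whose two children are leaves.
Lowering the start of the support from `a` to `a - 1` changes the flagged polynomial by
`∑ x_{a+i} β_{T∖v}` over such nodes `v`, where `i` is the inorder position of `v` and `T∖v`
is `T` with `v` replaced by a leaf; as nothing survives the start `0`, this gives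
`β_T = ∑_v x_{i+1} β_{T∖v}`. On the other side, the label `1` of a decreasing labelling sits
on such a node `v`, the code entry `c_1(ℓ⁻¹)` counts the entries left of `1` in the inorder
word, which is `i`, and deleting `v` and lowering the other labels by one is a bijection onto
the decreasing labellings of `T∖v` that shifts the remaining code entries by one place.
-/

/-- Plane binary trees. `leaf` is a leaf, `node l r` an internal node. -/
inductive BT where
  | leaf : BT
  | node : BT → BT → BT
deriving DecidableEq

/-- Number of internal nodes. -/
def BT.size : BT → ℕ
  | .leaf => 0
  | .node l r => l.size + r.size + 1

/-- Multiset of values `ρ_F(v)` (canonical label of the leftmost descendant,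
reached by following left edges) over the internal nodes of a tree whose
inorder canonical labels start at `a`. -/
def BT.rhoMS : BT → ℤ → Multiset ℤ
  | .leaf, _ => 0
  | .node l r, a => a ::ₘ (l.rhoMS a + r.rhoMS (a + l.size + 1))

/-- Multiset of canonical labels of internal nodes whose left child is a leaf
("left support"). -/
def BT.lsuppMS : BT → ℤ → Multiset ℤ
  | .leaf, _ => 0
  | .node l r, a =>
      (if l = BT.leaf then ({a} : Multiset ℤ) else 0) + l.lsuppMS a
        + r.lsuppMS (a + l.size + 1)

/-- The flagged generating polynomial of a binary tree with inorder labels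
starting at `a`, where every label is at least `lo` (lower bound transmitted
from the parent), at most the `ρ`-value of the node, labels weakly increase
down left edges and strictly increase down right edges. The variables are
`x_1, x_2, …` (the variable `X 0` is unused). -/
noncomputable def BT.polyAux : BT → ℤ → ℕ → MvPolynomial ℕ ℚ
  | .leaf, _, _ => 1
  | .node l r, a, lo =>
      ∑ k ∈ Finset.Icc lo a.toNat,
        MvPolynomial.X k * l.polyAux a k * r.polyAux (a + l.size + 1) (k + 1)

/-- The forest polynomial of a single indexed tree with support starting at `a`. -/
noncomputable def BT.poly (t : BT) (a : ℤ) : MvPolynomial ℕ ℚ := t.polyAux a 1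

/-- An indexed forest: a list of binary trees together with the starting points
of their supports, the supports being maximal intervals (consecutive supports
leave a gap of at least one integer). -/
structure IndexedForest where
  trees : List (ℤ × BT)
  nonempty : ∀ p ∈ trees, p.2 ≠ BT.leaf
  gaps : trees.Chain' (fun p q => p.1 + (p.2.size : ℤ) + 1 ≤ q.1)

/-- The support of an indexed forest, as a set of integers. -/
def IndexedForest.Supp (F : IndexedForest) : Set ℤ :=
  {i | ∃ p ∈ F.trees, p.1 ≤ i ∧ i < p.1 + (p.2.size : ℤ)}

/-- The multiset of `ρ_F`-values of all internal nodes of `F`. -/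
def IndexedForest.rhoMS (F : IndexedForest) : Multiset ℤ :=
  (F.trees.map (fun p => p.2.rhoMS p.1)).sum

/-- The `ℕ`-vector `c(F)`: `c_i` counts internal nodes with `ρ_F`-value `i`. -/
def cOf (F : IndexedForest) : ℤ → ℕ := fun i => F.rhoMS.count i

/-- The multiset of left-support labels of `F`. -/
def IndexedForest.lsuppMS (F : IndexedForest) : Multiset ℤ :=
  (F.trees.map (fun p => p.2.lsuppMS p.1)).sum

/-- Forest polynomial of a list of located trees. -/
noncomputable def polyL (ts : List (ℤ × BT)) : MvPolynomial ℕ ℚ :=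
  (ts.map (fun p => p.2.poly p.1)).prod

/-- The forest polynomial of an indexed forest. -/
noncomputable def IndexedForest.poly (F : IndexedForest) : MvPolynomial ℕ ℚ :=
  polyL F.trees

/-- Number of internal nodes of a forest. -/
def IndexedForest.size (F : IndexedForest) : ℕ :=
  (F.trees.map (fun p => p.2.size)).sum

/-- Generic labeled plane binary trees: internal nodes carry a label in `α`. -/
inductive GT (α : Type) where
  | leaf : GT α
  | node : α → GT α → GT α → GT α
deriving DecidableEq

/-- Underlying (unlabeled) shape. -/
def GT.shape {α : Type} : GT α → BT
  | .leaf => BT.leaf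
  | .node _ l r => BT.node l.shape r.shape

/-- Number of internal nodes. -/
def GT.size {α : Type} : GT α → ℕ
  | .leaf => 0
  | .node _ l r => l.size + r.size + 1

/-- Multiset of labels of internal nodes. -/
def GT.labels {α : Type} : GT α → Multiset α
  | .leaf => 0
  | .node k l r => k ::ₘ (l.labels + r.labels)

/-- Relabel a labeled tree. -/
def GT.map {α β : Type} (f : α → β) : GT α → GT β
  | .leaf => .leaf
  | .node k l r => .node (f k) (l.map f) (r.map f)

/-- The root label of a labeled tree (if any) is smaller than `k`. -/
def rootBelow (k : ℕ) : GT ℕ → Prop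
  | .leaf => True
  | .node m _ _ => m < k

/-- A decreasing labeling: labels strictly decrease away from the root. -/
def IsDec : GT ℕ → Prop
  | .leaf => True
  | .node k l r => rootBelow k l ∧ rootBelow k r ∧ IsDec l ∧ IsDec r

/-- Inorder reading of the labels of a labeled tree. -/
def GT.inorder {α : Type} : GT α → List α
  | .leaf => []
  | .node k l r => l.inorder ++ k :: r.inorder

/-- For a decreasing labeling `L` of a tree with support `{1,…,n-1}`, read in
inorder as the one-line notation of a permutation `ℓ ∈ S_{n-1}`, this is the
`i`-th entry of the Lehmer code of `ℓ⁻¹`: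
`c_i = #{j > i : ℓ⁻¹(i) > ℓ⁻¹(j)}`, where `ℓ⁻¹(i)` is the (1-based) position of
the value `i` in the inorder word. -/
def codeInv (L : GT ℕ) (n i : ℕ) : ℕ :=
  ((Finset.Ioc i (n - 1)).filter
    (fun j => L.inorder.idxOf j < L.inorder.idxOf i)).card

open MvPolynomial

namespace List

variable {α β : Type} [DecidableEq α] [DecidableEq β]

lemma idxOf_map_of_injective {f : α → β} (hf : Function.Injective f) (l : List α) (x : α) :
    (l.map f).idxOf (f x) = l.idxOf x := by
  induction l with
  | nil => rfl
  | cons a l ih =>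
    by_cases hax : a = x
    · subst hax; simp [idxOf_cons_self]
    · rw [map_cons, idxOf_cons_ne _ (hf.ne hax), idxOf_cons_ne _ hax, ih]

lemma idxOf_take_append_cons_drop {w : List α} {i : ℕ} {c x : α} (hx : x ≠ c)
    (hi : i ≤ w.length) :
    (w.take i ++ c :: w.drop i).idxOf x = if w.idxOf x < i then w.idxOf x else w.idxOf x + 1 := by
  by_cases hmem : x ∈ w.take i
  · have hlt := (mem_take_iff_idxOf_lt (mem_of_mem_take hmem)).mp hmem
    rw [idxOf_append_of_mem hmem, (take_prefix i w).idxOf_eq_of_mem hmem, if_pos hlt]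
  · have hw : w.idxOf x = i + (w.drop i).idxOf x := by
      conv_lhs => rw [← take_append_drop i w]
      rw [idxOf_append_of_notMem hmem, length_take, min_eq_left hi]
    rw [idxOf_append_of_notMem hmem, idxOf_cons_ne _ (Ne.symm hx), length_take, min_eq_left hi,
      hw, if_neg (by omega)]
    omega

lemma idxOf_lt_idxOf_take_append_cons_drop_iff {w : List α} {i : ℕ} {c x y : α} (hx : x ≠ c)
    (hy : y ≠ c) (hi : i ≤ w.length) :
    (w.take i ++ c :: w.drop i).idxOf x < (w.take i ++ c :: w.drop i).idxOf y ↔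
      w.idxOf x < w.idxOf y := by
  rw [idxOf_take_append_cons_drop hx hi, idxOf_take_append_cons_drop hy hi]
  split_ifs <;> omega

end List

namespace BT

/-- `(i, s) ∈ t.prunings` when `t` has a node with two leaf children at inorder position `i`
(counted from `0`) and `s` is `t` with that node replaced by a leaf. -/
def prunings : BT → List (ℕ × BT)
  | .leaf => []
  | .node l r =>
      if l = .leaf ∧ r = .leaf then [(0, .leaf)]
      else
        (prunings l).map (fun p => (p.1, .node p.2 r)) ++
        (prunings r).map (fun p => (p.1 + l.size + 1, .node l p.2))

/-- Replace the leaf at position `i` (leaves counted from `0` in inorder) by a node with two leaf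
children; the new node then sits at inorder position `i` among the nodes. -/
def graft : BT → ℕ → BT
  | .leaf, _ => .node .leaf .leaf
  | .node l r, i =>
      if i ≤ l.size then .node (l.graft i) r else .node l (r.graft (i - l.size - 1))

lemma size_graft (t : BT) (i : ℕ) : (t.graft i).size = t.size + 1 := by
  induction t generalizing i with
  | leaf => rfl
  | node l r ihl ihr =>
    unfold graft
    split <;> simp only [size, ihl, ihr] <;> omega

lemma graft_ne_leaf (t : BT) (i : ℕ) : t.graft i ≠ .leaf := by
  cases t with
  | leaf => simp [graft]
  | node l r => unfold graft; split <;> simp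

lemma prunings_node_of_not_leaves {l r : BT} (h : ¬(l = .leaf ∧ r = .leaf)) :
    (node l r).prunings =
      l.prunings.map (fun p => (p.1, .node p.2 r)) ++
        r.prunings.map (fun p => (p.1 + l.size + 1, .node l p.2)) := by
  rw [prunings, if_neg h]

lemma graft_of_mem_prunings {t : BT} {p : ℕ × BT} (hp : p ∈ t.prunings) :
    p.1 ≤ p.2.size ∧ p.2.graft p.1 = t := by
  induction t generalizing p with
  | leaf => simp [prunings] at hp
  | node l r ihl ihr =>
    by_cases hc : l = .leaf ∧ r = .leaf
    · obtain ⟨rfl, rfl⟩ := hc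
      simp only [prunings, and_self, if_true, List.mem_singleton] at hp
      subst hp
      simp [graft, size]
    · rw [prunings_node_of_not_leaves hc, List.mem_append, List.mem_map, List.mem_map] at hp
      rcases hp with ⟨q, hq, rfl⟩ | ⟨q, hq, rfl⟩
      · obtain ⟨hle, hgraft⟩ := ihl hq
        refine ⟨by simp only [size]; omega, ?_⟩
        simp [graft, hle, hgraft]
      · obtain ⟨hle, hgraft⟩ := ihr hq
        refine ⟨by simp only [size]; omega, ?_⟩
        rw [graft, if_neg (by omega), show q.1 + l.size + 1 - l.size - 1 = q.1 by omega, hgraft]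

lemma mem_prunings_graft {s : BT} {i : ℕ} (hi : i ≤ s.size) :
    (i, s) ∈ (s.graft i).prunings := by
  induction s generalizing i with
  | leaf =>
    obtain rfl : i = 0 := by simpa [size] using hi
    simp [graft, prunings]
  | node l r ihl ihr =>
    unfold graft
    split_ifs with hil
    · rw [prunings_node_of_not_leaves (fun h => graft_ne_leaf l i h.1)]
      exact List.mem_append_left _ (List.mem_map.mpr ⟨(i, l), ihl hil, rfl⟩)
    · rw [prunings_node_of_not_leaves (fun h => graft_ne_leaf r _ h.2)]
      refine List.mem_append_right _ (List.mem_map.mpr ⟨(i - l.size - 1, r), ihr ?_, ?_⟩)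
      · simp only [size] at hi; omega
      · simp only [Prod.mk.injEq, and_true]; omega

lemma mem_prunings_iff {t : BT} {p : ℕ × BT} :
    p ∈ t.prunings ↔ p.1 ≤ p.2.size ∧ p.2.graft p.1 = t := by
  refine ⟨graft_of_mem_prunings, fun ⟨hle, hgraft⟩ => ?_⟩
  subst hgraft
  exact mem_prunings_graft hle

lemma size_of_mem_prunings {t : BT} {p : ℕ × BT} (hp : p ∈ t.prunings) :
    p.2.size + 1 = t.size := by
  rw [← (graft_of_mem_prunings hp).2, size_graft]

lemma nodup_prunings (t : BT) : t.prunings.Nodup := by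
  suffices (t.prunings.map Prod.fst).Nodup from this.of_map _
  induction t with
  | leaf => simp [prunings]
  | node l r ihl ihr =>
    by_cases hc : l = .leaf ∧ r = .leaf
    · simp [prunings, hc]
    · rw [prunings_node_of_not_leaves hc, List.map_append, List.map_map, List.map_map,
        List.nodup_append]
      refine ⟨ihl, ?_, ?_⟩
      · simpa [Function.comp_def] using
          ihr.map (f := (· + l.size + 1)) fun x y h => by simpa using h
      · simp only [List.mem_map, Function.comp_apply]
        rintro _ ⟨p, hp, rfl⟩ _ ⟨q, -, rfl⟩
        have := graft_of_mem_prunings hp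
        have := size_of_mem_prunings hp
        omega


lemma polyAux_node_of_toNat_lt {l r : BT} {a : ℤ} {lo : ℕ} (h : a.toNat < lo) :
    (node l r).polyAux a lo = 0 := by
  rw [polyAux, Finset.Icc_eq_empty (by omega), Finset.sum_empty]

lemma sum_polyAux_mul_listSum_right (l : BT) (a : ℤ) (lo : ℕ) (ps : List (ℕ × BT))
    (c : ℕ × BT → MvPolynomial ℕ ℚ) :
    ∑ k ∈ Finset.Icc lo a.toNat, X k * l.polyAux a k *
        (ps.map fun q => c q * q.2.polyAux (a + l.size + 1) (k + 1)).sum =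
      (ps.map fun q => c q * (node l q.2).polyAux a lo).sum := by
  simp only [polyAux, Finset.mul_sum, ← List.sum_map_mul_left]
  have := Multiset.sum_map_sum (m := (ps : Multiset (ℕ × BT))) (s := Finset.Icc lo a.toNat)
    (f := fun q k => X k * l.polyAux a k * (c q * q.2.polyAux (a + l.size + 1) (k + 1)))
  simp only [Multiset.map_coe, Multiset.sum_coe] at this
  rw [← this]
  refine congrArg List.sum (List.map_congr_left fun q _ => Finset.sum_congr rfl fun k _ => ?_)
  ring

lemma sum_listSum_mul_polyAux_left (r : BT) (a : ℤ) (lo s : ℕ) (ps : List (ℕ × BT))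
    (hs : ∀ q ∈ ps, q.2.size + 1 = s) (c : ℕ × BT → MvPolynomial ℕ ℚ) :
    ∑ k ∈ Finset.Icc lo a.toNat,
        X k * (ps.map fun q => c q * q.2.polyAux a k).sum * r.polyAux (a + s) (k + 1) =
      (ps.map fun q => c q * (node q.2 r).polyAux a lo).sum := by
  simp only [polyAux, Finset.mul_sum, ← List.sum_map_mul_left, ← List.sum_map_mul_right]
  have := Multiset.sum_map_sum (m := (ps : Multiset (ℕ × BT))) (s := Finset.Icc lo a.toNat)
    (f := fun q k => X k * (c q * q.2.polyAux a k) * r.polyAux (a + s) (k + 1))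
  simp only [Multiset.map_coe, Multiset.sum_coe] at this
  rw [← this]
  refine congrArg List.sum (List.map_congr_left fun q hq => Finset.sum_congr rfl fun k _ => ?_)
  rw [← hs q hq, Nat.cast_add, Nat.cast_one, ← add_assoc]
  ring

/-- Lowering the start of the support by one kills the top summand `k = a`: either the left
subtree is a node and needs labels `≤ a - 1`, or it is a leaf and the right one needs labels
`≥ a + 1 > a`. -/
lemma sum_polyAux_pred (l r : BT) (hc : ¬(l = .leaf ∧ r = .leaf)) {a : ℤ} {lo : ℕ}
    (ha : 1 ≤ a) (hlo : (lo : ℤ) ≤ a) :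
    ∑ k ∈ Finset.Icc lo a.toNat, X k * l.polyAux (a - 1) k * r.polyAux (a + l.size) (k + 1) =
      (node l r).polyAux (a - 1) lo := by
  have htop : X a.toNat * l.polyAux (a - 1) a.toNat * r.polyAux (a + l.size) (a.toNat + 1) = 0 := by
    cases l with
    | node l₁ l₂ => rw [polyAux_node_of_toNat_lt (by omega), mul_zero, zero_mul]
    | leaf =>
      obtain ⟨r₁, r₂, rfl⟩ : ∃ r₁ r₂, r = node r₁ r₂ := by
        cases r with
        | leaf => exact absurd ⟨rfl, rfl⟩ hc
        | node r₁ r₂ => exact ⟨r₁, r₂, rfl⟩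
      rw [polyAux_node_of_toNat_lt (by simp only [size]; omega), mul_zero]
  rw [polyAux, show a - 1 + l.size + 1 = a + l.size by ring,
    show a.toNat = (a - 1).toNat + 1 by omega, Finset.sum_Icc_succ_top (by omega)]
  rw [show (a - 1).toNat + 1 = a.toNat by omega, htop, add_zero]

theorem polyAux_eq_sum_prunings_add (t : BT) {a : ℤ} {lo : ℕ} (ha : 1 ≤ a)
    (hlo : (lo : ℤ) ≤ a) :
    t.polyAux a lo = (t.prunings.map fun p => X (a.toNat + p.1) * p.2.polyAux a lo).sum +
      t.polyAux (a - 1) lo := by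
  induction t generalizing a lo with
  | leaf => simp [prunings, polyAux]
  | node l r ihl ihr =>
    by_cases hc : l = .leaf ∧ r = .leaf
    · obtain ⟨rfl, rfl⟩ := hc
      simp only [polyAux, prunings, and_self, if_true, mul_one, List.map_cons, List.map_nil,
        List.sum_cons, List.sum_nil, add_zero]
      rw [show a.toNat = (a - 1).toNat + 1 by omega, Finset.sum_Icc_succ_top (by omega)]
      ring
    set A := a.toNat
    have hA : ∀ i, (a + l.size + 1).toNat + i = A + (i + l.size + 1) := fun i => by omega
    calc (node l r).polyAux a lo
        = ∑ k ∈ Finset.Icc lo A,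
            (X k * l.polyAux a k * (r.prunings.map fun q =>
                X (A + (q.1 + l.size + 1)) * q.2.polyAux (a + l.size + 1) (k + 1)).sum +
              X k * (l.prunings.map fun q => X (A + q.1) * q.2.polyAux a k).sum *
                r.polyAux (a + l.size) (k + 1) +
              X k * l.polyAux (a - 1) k * r.polyAux (a + l.size) (k + 1)) := by
          rw [polyAux]
          refine Finset.sum_congr rfl fun k hk => ?_
          rw [Finset.mem_Icc] at hk
          rw [ihr (by omega) (by push_cast; omega), add_sub_cancel_right]
          simp only [hA]
          linear_combination (X k * r.polyAux (a + l.size) (k + 1)) * ihl (lo := k) ha (by omega)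
      _ = _ := by
          rw [Finset.sum_add_distrib, Finset.sum_add_distrib, sum_polyAux_mul_listSum_right,
            sum_listSum_mul_polyAux_left r a lo l.size _ fun q => size_of_mem_prunings,
            sum_polyAux_pred l r hc ha hlo, prunings_node_of_not_leaves hc]
          simp only [List.map_append, List.sum_append, List.map_map, Function.comp_def]
          ring

lemma poly_one_eq_sum_prunings {t : BT} (ht : t ≠ .leaf) :
    t.poly 1 = (t.prunings.map fun p => X (p.1 + 1) * p.2.poly 1).sum := by
  obtain ⟨l, r, rfl⟩ : ∃ l r, t = node l r := by
    cases t with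
    | leaf => exact absurd rfl ht
    | node l r => exact ⟨l, r, rfl⟩
  rw [poly, polyAux_eq_sum_prunings_add _ le_rfl le_rfl, sub_self,
    polyAux_node_of_toNat_lt (by norm_num), add_zero]
  refine congrArg List.sum (List.map_congr_left fun p _ => ?_)
  rw [poly, Int.toNat_one, add_comm]

end BT

namespace GT

variable {α : Type}

lemma size_shape (L : GT α) : L.shape.size = L.size := by
  induction L with
  | leaf => rfl
  | node _ l r ihl ihr => simp [shape, BT.size, size, ihl, ihr]

lemma coe_inorder (L : GT α) : (L.inorder : Multiset α) = L.labels := by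
  induction L with
  | leaf => rfl
  | node k l r ihl ihr => simp [inorder, labels, ← ihl, ← ihr]

lemma length_inorder (L : GT α) : L.inorder.length = L.size := by
  induction L with
  | leaf => rfl
  | node k l r ihl ihr => simp [inorder, size, ihl, ihr]; omega

lemma shape_map {β : Type} (f : α → β) (L : GT α) : (L.map f).shape = L.shape := by
  induction L with
  | leaf => rfl
  | node k l r ihl ihr => simp [map, shape, ihl, ihr]

lemma size_map {β : Type} (f : α → β) (L : GT α) : (L.map f).size = L.size := by
  rw [← size_shape, shape_map, size_shape]

lemma labels_map {β : Type} (f : α → β) (L : GT α) : (L.map f).labels = L.labels.map f := by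
  induction L with
  | leaf => rfl
  | node k l r ihl ihr => simp [map, labels, ihl, ihr]

lemma inorder_map {β : Type} (f : α → β) (L : GT α) :
    (L.map f).inorder = L.inorder.map f := by
  induction L with
  | leaf => rfl
  | node k l r ihl ihr => simp [map, inorder, ihl, ihr]

lemma map_map {β γ : Type} (f : α → β) (g : β → γ) (L : GT α) :
    (L.map f).map g = L.map (g ∘ f) := by
  induction L with
  | leaf => rfl
  | node k l r ihl ihr => simp [map, ihl, ihr]

lemma map_eq_self {f : α → α} {L : GT α} (h : ∀ x ∈ L.labels, f x = x) : L.map f = L := by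
  induction L with
  | leaf => rfl
  | node k l r ihl ihr =>
    simp only [labels, Multiset.mem_cons, Multiset.mem_add] at h
    rw [map, h k (Or.inl rfl), ihl fun x hx => h x (Or.inr (Or.inl hx)),
      ihr fun x hx => h x (Or.inr (Or.inr hx))]

def graft : GT α → ℕ → α → GT α
  | .leaf, _, k => .node k .leaf .leaf
  | .node x l r, i, k =>
      if i ≤ l.size then .node x (l.graft i k) r else .node x l (r.graft (i - l.size - 1) k)

lemma shape_graft (M : GT α) (i : ℕ) (k : α) : (M.graft i k).shape = M.shape.graft i := by
  induction M generalizing i with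
  | leaf => rfl
  | node x l r ihl ihr =>
    simp only [graft, shape, BT.graft, size_shape]
    split <;> simp [shape, ihl, ihr]

lemma labels_graft (M : GT α) (i : ℕ) (k : α) : (M.graft i k).labels = k ::ₘ M.labels := by
  induction M generalizing i with
  | leaf => rfl
  | node x l r ihl ihr =>
    unfold graft
    split
    · rw [labels, labels, ihl, Multiset.cons_add, Multiset.cons_swap]
    · rw [labels, labels, ihr, Multiset.add_cons, Multiset.cons_swap]

lemma size_graft (M : GT α) (i : ℕ) (k : α) : (M.graft i k).size = M.size + 1 := by
  rw [← size_shape, shape_graft, BT.size_graft, size_shape]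

lemma inorder_graft (M : GT α) (i : ℕ) (k : α) :
    (M.graft i k).inorder = M.inorder.take i ++ k :: M.inorder.drop i := by
  induction M generalizing i with
  | leaf => simp [graft, inorder]
  | node x l r ihl ihr =>
    have hl := length_inorder l
    unfold graft
    split_ifs with hi
    · rw [inorder, inorder, ihl, List.take_append_of_le_length (by omega),
        List.drop_append_of_le_length (by omega)]
      simp
    · obtain ⟨j, rfl⟩ : ∃ j, i = l.size + 1 + j := ⟨i - l.size - 1, by omega⟩
      rw [inorder, inorder, ihr, show l.size + 1 + j - l.size - 1 = j by omega,
        show l.inorder ++ x :: r.inorder = (l.inorder ++ [x]) ++ r.inorder by simp,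
        show l.size + 1 + j = (l.inorder ++ [x]).length + j by simp [hl],
        List.take_length_add_append, List.drop_length_add_append]
      simp

lemma idxOf_inorder_graft [DecidableEq α] {M : GT α} {i : ℕ} {k : α} (hk : k ∉ M.labels)
    (hi : i ≤ M.size) : (M.graft i k).inorder.idxOf k = i := by
  have hk' : k ∉ M.inorder.take i := fun h =>
    hk (by rw [← coe_inorder, Multiset.mem_coe]; exact List.mem_of_mem_take h)
  rw [inorder_graft, List.idxOf_append_of_notMem hk', List.idxOf_cons_self, List.length_take,
    length_inorder]
  omega

end GT

lemma rootBelow_graft {x k : ℕ} {M : GT ℕ} (hk : k < x) (h : rootBelow x M) (i : ℕ) :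
    rootBelow x (M.graft i k) := by
  cases M with
  | leaf => exact hk
  | node m l r => unfold GT.graft; split <;> exact h

lemma isDec_graft {M : GT ℕ} {k : ℕ} (hk : ∀ x ∈ M.labels, k < x) (h : IsDec M) (i : ℕ) :
    IsDec (M.graft i k) := by
  induction M generalizing i with
  | leaf => exact ⟨trivial, trivial, trivial, trivial⟩
  | node x l r ihl ihr =>
    obtain ⟨hl, hr, hdl, hdr⟩ := h
    have hkx : k < x := hk x (Multiset.mem_cons_self _ _)
    have hkl : ∀ y ∈ l.labels, k < y := fun y hy => hk y (by simp [GT.labels, hy])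
    have hkr : ∀ y ∈ r.labels, k < y := fun y hy => hk y (by simp [GT.labels, hy])
    unfold GT.graft
    split
    · exact ⟨rootBelow_graft hkx hl i, hr, ihl hkl hdl i, hdr⟩
    · exact ⟨hl, rootBelow_graft hkx hr _, hdl, ihr hkr hdr _⟩

lemma IsDec.map {L : GT ℕ} (h : IsDec L) {f : ℕ → ℕ}
    (hf : StrictMonoOn f {x | x ∈ L.labels}) :
    IsDec (L.map f) := by
  induction L with
  | leaf => trivial
  | node k l r ihl ihr =>
    obtain ⟨hl, hr, hdl, hdr⟩ := h
    have hk : k ∈ (GT.node k l r).labels := Multiset.mem_cons_self _ _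
    have hfl : StrictMonoOn f {x | x ∈ l.labels} :=
      hf.mono fun _ hy => Multiset.mem_cons_of_mem (Multiset.mem_add.mpr (Or.inl hy))
    have hfr : StrictMonoOn f {x | x ∈ r.labels} :=
      hf.mono fun _ hy => Multiset.mem_cons_of_mem (Multiset.mem_add.mpr (Or.inr hy))
    refine ⟨?_, ?_, ihl hdl hfl, ihr hdr hfr⟩
    · cases l with
      | leaf => trivial
      | node m _ _ => exact hf (by simp [GT.labels]) hk hl
    · cases r with
      | leaf => trivial
      | node m _ _ => exact hf (by simp [GT.labels]) hk hr

namespace GT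

def eraseOne : GT ℕ → GT ℕ
  | .leaf => .leaf
  | .node k l r => if k = 1 then .leaf else .node k l.eraseOne r.eraseOne

lemma eraseOne_of_one_notMem {L : GT ℕ} (h : 1 ∉ L.labels) : L.eraseOne = L := by
  induction L with
  | leaf => rfl
  | node k l r ihl ihr =>
    simp only [labels, Multiset.mem_cons, Multiset.mem_add, not_or] at h
    rw [eraseOne, if_neg (Ne.symm h.1), ihl h.2.1, ihr h.2.2]

lemma eraseOne_graft {M : GT ℕ} (h : 1 ∉ M.labels) (i : ℕ) : (M.graft i 1).eraseOne = M := by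
  induction M generalizing i with
  | leaf => simp [graft, eraseOne]
  | node k l r ihl ihr =>
    simp only [labels, Multiset.mem_cons, Multiset.mem_add, not_or] at h
    unfold graft
    split <;> simp [eraseOne, Ne.symm h.1, ihl h.2.1, ihr h.2.2, eraseOne_of_one_notMem, h]

lemma rootBelow_eraseOne {k : ℕ} {L : GT ℕ} (h : rootBelow k L) : rootBelow k L.eraseOne := by
  cases L with
  | leaf => trivial
  | node m l r => unfold eraseOne; split; exacts [trivial, h]

lemma isDec_eraseOne {L : GT ℕ} (h : IsDec L) : IsDec L.eraseOne := by
  induction L with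
  | leaf => trivial
  | node k l r ihl ihr =>
    obtain ⟨hl, hr, hdl, hdr⟩ := h
    unfold eraseOne
    split
    · trivial
    · exact ⟨rootBelow_eraseOne hl, rootBelow_eraseOne hr, ihl hdl, ihr hdr⟩

lemma eq_leaf_of_rootBelow_one {L : GT ℕ} (h : rootBelow 1 L)
    (hpos : ∀ x ∈ L.labels, 1 ≤ x) : L = .leaf := by
  cases L with
  | leaf => rfl
  | node m _ _ =>
    have := hpos m (Multiset.mem_cons_self _ _)
    simp only [rootBelow] at h
    omega

/-- Labels are positive and decrease away from the root, so the node labelled `1` has two leaf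
children. -/
lemma graft_eraseOne {L : GT ℕ} (hdec : IsDec L) (hpos : ∀ x ∈ L.labels, 1 ≤ x)
    (hone : L.labels.count 1 = 1) : L.eraseOne.graft (L.inorder.idxOf 1) 1 = L := by
  induction L with
  | leaf => simp [labels] at hone
  | node k l r ihl ihr =>
    obtain ⟨hl, hr, hdl, hdr⟩ := hdec
    have hposl : ∀ x ∈ l.labels, 1 ≤ x := fun x hx => hpos x (by simp [labels, hx])
    have hposr : ∀ x ∈ r.labels, 1 ≤ x := fun x hx => hpos x (by simp [labels, hx])
    by_cases hk : k = 1
    · subst hk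
      obtain rfl := eq_leaf_of_rootBelow_one hl hposl
      obtain rfl := eq_leaf_of_rootBelow_one hr hposr
      simp [eraseOne, inorder, graft]
    have hcount : l.labels.count 1 + r.labels.count 1 = 1 := by
      simpa [labels, Multiset.count_cons_of_ne (Ne.symm hk)] using hone
    rw [eraseOne, if_neg hk, inorder]
    by_cases hcl : l.labels.count 1 = 1
    · have hr1 : 1 ∉ r.labels := Multiset.count_eq_zero.mp (by omega)
      have hl1 : 1 ∈ l.inorder := by
        rw [← Multiset.mem_coe, coe_inorder, ← Multiset.count_pos]; omega
      have ihl := ihl hdl hposl hcl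
      have hidx : l.inorder.idxOf 1 < l.inorder.length := List.idxOf_lt_length_of_mem hl1
      have hsize := congrArg size ihl
      rw [size_graft] at hsize
      rw [length_inorder] at hidx
      rw [List.idxOf_append_of_mem hl1, eraseOne_of_one_notMem hr1, graft, if_pos (by omega), ihl]
    · have hl1 : 1 ∉ l.inorder := by
        rw [← Multiset.mem_coe, coe_inorder, ← Multiset.count_eq_zero]; omega
      rw [List.idxOf_append_of_notMem hl1, List.idxOf_cons_ne _ hk,
        eraseOne_of_one_notMem (by rwa [← Multiset.mem_coe, coe_inorder] at hl1), graft,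
        if_neg (by rw [length_inorder]; omega), length_inorder,
        show l.size + (r.inorder.idxOf 1 + 1) - l.size - 1 = r.inorder.idxOf 1 by omega,
        ihr hdr hposr (by omega)]

end GT

lemma codeInv_one_of_inorder_eq {L : GT ℕ} {w : List ℕ} {m i : ℕ} (hw : w.Nodup)
    (hwm : ∀ x ∈ w, 2 ≤ x ∧ x ≤ m) (hi : i ≤ w.length)
    (hL : L.inorder = w.take i ++ 1 :: w.drop i) : codeInv L (m + 1) 1 = i := by
  have h1 : L.inorder.idxOf 1 = i := by
    have : 1 ∉ w.take i := fun h => by have := hwm 1 (List.mem_of_mem_take h); omega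
    rw [hL, List.idxOf_append_of_notMem this, List.idxOf_cons_self, List.length_take]
    omega
  have hset : (Finset.Ioc 1 (m + 1 - 1)).filter (fun j => L.inorder.idxOf j < i) =
      (w.take i).toFinset := by
    ext x
    simp only [Finset.mem_filter, Finset.mem_Ioc, List.mem_toFinset]
    rw [hL]
    constructor
    · rintro ⟨⟨hx1, -⟩, hlt⟩
      rw [List.idxOf_take_append_cons_drop (by omega) hi] at hlt
      have hxw : x ∈ w := by
        by_contra hxw
        rw [List.idxOf_of_notMem hxw] at hlt
        split_ifs at hlt <;> omega
      rw [List.mem_take_iff_idxOf_lt hxw]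
      split_ifs at hlt <;> omega
    · intro hx
      have hxw := List.mem_of_mem_take hx
      have hlt := (List.mem_take_iff_idxOf_lt hxw).mp hx
      have := hwm x hxw
      refine ⟨⟨by omega, by omega⟩, ?_⟩
      rwa [List.idxOf_take_append_cons_drop (by omega) hi, if_pos hlt]
  rw [codeInv, h1, hset, List.toFinset_card_of_nodup (hw.sublist (List.take_sublist _ _)),
    List.length_take]
  omega

lemma codeInv_succ_of_inorder_eq {L L' : GT ℕ} {m i j : ℕ} (hj : 1 ≤ j)
    (hi : i ≤ L'.inorder.length)
    (hL : L.inorder = (L'.inorder.map (· + 1)).take i ++ 1 :: (L'.inorder.map (· + 1)).drop i) :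
    codeInv L (m + 1) (j + 1) = codeInv L' m j := by
  have hIoc :
      Finset.Ioc (j + 1) (m + 1 - 1) = (Finset.Ioc j (m - 1)).map (addRightEmbedding 1) := by
    ext x
    simp only [Finset.mem_Ioc, Finset.mem_map, addRightEmbedding_apply]
    constructor
    · rintro ⟨h1, h2⟩; exact ⟨x - 1, by omega, by omega⟩
    · rintro ⟨y, ⟨h1, h2⟩, rfl⟩; omega
  rw [codeInv, codeInv, hIoc, Finset.filter_map, Finset.card_map]
  congr 1
  refine Finset.filter_congr fun y hy => ?_
  rw [Finset.mem_Ioc] at hy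
  simp only [Function.comp_apply, addRightEmbedding_apply, hL]
  rw [List.idxOf_lt_idxOf_take_append_cons_drop_iff (by omega) (by omega) (by simpa using hi),
    List.idxOf_map_of_injective (add_left_injective 1),
    List.idxOf_map_of_injective (add_left_injective 1)]

lemma mem_map_add_one_range {x m : ℕ} :
    x ∈ (Multiset.range m).map (· + 1) ↔ 1 ≤ x ∧ x ≤ m := by
  simp only [Multiset.mem_map, Multiset.mem_range]
  constructor
  · rintro ⟨a, ha, rfl⟩; omega
  · rintro ⟨h1, h2⟩; exact ⟨x - 1, by omega, by omega⟩

lemma nodup_map_add_one_range (m : ℕ) : ((Multiset.range m).map (· + 1)).Nodup :=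
  (Multiset.nodup_range m).map (add_left_injective 1)

lemma map_add_one_range_succ (m : ℕ) :
    (Multiset.range (m + 1)).map (· + 1) =
      1 ::ₘ ((Multiset.range m).map (· + 1)).map (· + 1) := by
  rw [Multiset.range, Multiset.range, List.range_succ_eq_map, Multiset.map_map,
    ← Multiset.cons_coe, Multiset.map_cons, Multiset.map_coe, Multiset.map_coe, List.map_map]

/-- Inserting the smallest label `1` at position `i` of the inorder word contributes `c_1 = i`
and shifts the remaining code entries by one place. -/
lemma prod_codeInv_graft {L' : GT ℕ} {m i : ℕ}
    (hlab : L'.labels = (Multiset.range m).map (· + 1)) (hi : i ≤ m) :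
    ∏ j ∈ Finset.Icc 1 (m + 1), X (codeInv ((L'.map (· + 1)).graft i 1) (m + 1 + 1) j + 1) =
      (X (i + 1) * ∏ j ∈ Finset.Icc 1 m, X (codeInv L' (m + 1) j + 1) :
        MvPolynomial ℕ ℚ) := by
  have hlen : L'.inorder.length = m := by
    simpa [hlab] using congrArg Multiset.card (GT.coe_inorder L')
  have hnodup : L'.inorder.Nodup := by
    rw [← Multiset.coe_nodup, GT.coe_inorder, hlab]; exact nodup_map_add_one_range m
  have hmem : ∀ x ∈ L'.inorder, 1 ≤ x ∧ x ≤ m := fun x hx => by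
    rwa [← Multiset.mem_coe, GT.coe_inorder, hlab, mem_map_add_one_range] at hx
  have hL := (GT.inorder_graft (L'.map (· + 1)) i 1).trans (by rw [GT.inorder_map])
  have hIoc : Finset.Ioc 1 (m + 1) = (Finset.Icc 1 m).map (addRightEmbedding 1) := by
    ext x
    simp only [Finset.mem_Ioc, Finset.mem_Icc, Finset.mem_map, addRightEmbedding_apply]
    constructor
    · rintro ⟨h1, h2⟩; exact ⟨x - 1, by omega, by omega⟩
    · rintro ⟨y, ⟨h1, h2⟩, rfl⟩; omega
  rw [Finset.Icc_eq_cons_Ioc (by omega), Finset.prod_cons, hIoc, Finset.prod_map,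
    codeInv_one_of_inorder_eq (hnodup.map (add_left_injective 1)) _ (by simpa [hlen]) hL]
  · congr 1
    refine Finset.prod_congr rfl fun j hj => ?_
    rw [addRightEmbedding_apply,
      codeInv_succ_of_inorder_eq (Finset.mem_Icc.mp hj).1 (by omega) hL]
  · simp only [List.mem_map]
    rintro _ ⟨x, hx, rfl⟩
    have := hmem x hx
    omega

namespace BT

def labelingsBelow : BT → ℕ → Finset (GT ℕ)
  | .leaf, _ => {.leaf}
  | .node l r, N =>
      (Finset.range N ×ˢ (l.labelingsBelow N ×ˢ r.labelingsBelow N)).image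
        fun p => .node p.1 p.2.1 p.2.2

lemma mem_labelingsBelow {t : BT} {N : ℕ} {L : GT ℕ} :
    L ∈ t.labelingsBelow N ↔ L.shape = t ∧ ∀ x ∈ L.labels, x < N := by
  induction t generalizing L with
  | leaf => cases L <;> simp [labelingsBelow, GT.shape, GT.labels]
  | node tl tr ihl ihr =>
    cases L with
    | leaf => simp [labelingsBelow, GT.shape]
    | node k l r =>
      simp only [labelingsBelow, Finset.mem_image, Finset.mem_product, Finset.mem_range, GT.shape,
        GT.labels, Multiset.mem_cons, Multiset.mem_add, node.injEq, GT.node.injEq, ihl, ihr]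
      constructor
      · rintro ⟨⟨a, b, c⟩, ⟨ha, ⟨hbs, hb⟩, ⟨hcs, hc⟩⟩, rfl, rfl, rfl⟩
        exact ⟨⟨hbs, hcs⟩, by rintro x (rfl | hx | hx); exacts [ha, hb x hx, hc x hx]⟩
      · rintro ⟨⟨hl, hr⟩, hx⟩
        exact ⟨⟨k, l, r⟩, ⟨hx k (Or.inl rfl), ⟨hl, fun x h => hx x (Or.inr (Or.inl h))⟩,
          ⟨hr, fun x h => hx x (Or.inr (Or.inr h))⟩⟩, rfl, rfl, rfl⟩

noncomputable def decLabelings (t : BT) : Finset (GT ℕ) := by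
  classical
  exact (t.labelingsBelow (t.size + 1)).filter
    fun L => IsDec L ∧ L.labels = (Multiset.range t.size).map (· + 1)

lemma mem_decLabelings {t : BT} {L : GT ℕ} :
    L ∈ t.decLabelings ↔
      L.shape = t ∧ IsDec L ∧ L.labels = (Multiset.range t.size).map (· + 1) := by
  classical
  rw [decLabelings, Finset.mem_filter, mem_labelingsBelow]
  refine ⟨fun ⟨⟨hs, _⟩, h⟩ => ⟨hs, h⟩,
    fun ⟨hs, hd, hl⟩ => ⟨⟨hs, fun x hx => ?_⟩, hd, hl⟩⟩
  rw [hl, mem_map_add_one_range] at hx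
  omega

lemma decLabelings_leaf : leaf.decLabelings = {.leaf} := by
  ext L
  cases L <;> simp [mem_decLabelings, GT.shape, GT.labels, IsDec, size]

noncomputable def lehmerSum (t : BT) : MvPolynomial ℕ ℚ :=
  ∑ L ∈ t.decLabelings, ∏ i ∈ Finset.Icc 1 t.size, X (codeInv L (t.size + 1) i + 1)

end BT

namespace GT

variable {t : BT} {L : GT ℕ} {m : ℕ}

lemma graft_eraseOne_of_mem_decLabelings (hL : L ∈ t.decLabelings) (ht : t.size = m + 1) :
    L.eraseOne.graft (L.inorder.idxOf 1) 1 = L := by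
  obtain ⟨-, hdec, hlab⟩ := BT.mem_decLabelings.mp hL
  refine graft_eraseOne hdec (fun x hx => ?_) ?_
  · rw [hlab, mem_map_add_one_range] at hx; exact hx.1
  · rw [hlab]
    exact Multiset.count_eq_one_of_mem (nodup_map_add_one_range _) (mem_map_add_one_range.mpr
      ⟨le_rfl, by omega⟩)

lemma labels_eraseOne_of_mem_decLabelings (hL : L ∈ t.decLabelings) (ht : t.size = m + 1) :
    L.eraseOne.labels = ((Multiset.range m).map (· + 1)).map (· + 1) := by
  have h := congrArg labels (graft_eraseOne_of_mem_decLabelings hL ht)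
  rw [labels_graft, (BT.mem_decLabelings.mp hL).2.2, ht, map_add_one_range_succ] at h
  exact (Multiset.cons_inj_right 1).mp h

lemma two_le_of_mem_labels_eraseOne (hL : L ∈ t.decLabelings) (ht : t.size = m + 1) :
    ∀ x ∈ L.eraseOne.labels, 2 ≤ x := by
  rw [labels_eraseOne_of_mem_decLabelings hL ht]
  simp only [Multiset.mem_map, Multiset.mem_range]
  rintro _ ⟨_, ⟨_, _, rfl⟩, rfl⟩
  omega

lemma size_eraseOne_of_mem_decLabelings (hL : L ∈ t.decLabelings) (ht : t.size = m + 1) :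
    L.eraseOne.size = m := by
  have h := congrArg size (graft_eraseOne_of_mem_decLabelings hL ht)
  rw [size_graft, ← size_shape L, (BT.mem_decLabelings.mp hL).1] at h
  omega

lemma mem_prunings_of_mem_decLabelings (hL : L ∈ t.decLabelings) (ht : t.size = m + 1) :
    (L.inorder.idxOf 1, L.eraseOne.shape) ∈ t.prunings := by
  have hgraft := graft_eraseOne_of_mem_decLabelings hL ht
  have hlt : L.inorder.idxOf 1 < L.inorder.length := by
    refine List.idxOf_lt_length_of_mem ?_
    rw [← Multiset.mem_coe, coe_inorder, ← hgraft, labels_graft]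
    exact Multiset.mem_cons_self _ _
  rw [length_inorder, ← size_shape, (BT.mem_decLabelings.mp hL).1, ht] at hlt
  rw [BT.mem_prunings_iff, ← (BT.mem_decLabelings.mp hL).1, size_shape,
    size_eraseOne_of_mem_decLabelings hL ht, ← shape_graft, hgraft]
  exact ⟨by omega, rfl⟩

lemma map_sub_one_eraseOne_mem_decLabelings (hL : L ∈ t.decLabelings) (ht : t.size = m + 1) :
    L.eraseOne.map (· - 1) ∈ L.eraseOne.shape.decLabelings := by
  have htwo := two_le_of_mem_labels_eraseOne hL ht
  refine BT.mem_decLabelings.mpr ⟨shape_map _ _, ?_, ?_⟩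
  · refine (isDec_eraseOne (BT.mem_decLabelings.mp hL).2.1).map fun x hx y hy hxy => ?_
    have := htwo x hx
    show x - 1 < y - 1
    omega
  · rw [labels_map, labels_eraseOne_of_mem_decLabelings hL ht, Multiset.map_map, size_shape,
      size_eraseOne_of_mem_decLabelings hL ht]
    simp

lemma one_lt_of_mem_labels_map_add_one {s : BT} (hL : L ∈ s.decLabelings) :
    ∀ x ∈ (L.map (· + 1)).labels, 1 < x := by
  simp only [labels_map, Multiset.mem_map]
  rintro _ ⟨x, hx, rfl⟩
  rw [(BT.mem_decLabelings.mp hL).2.2, mem_map_add_one_range] at hx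
  omega

lemma graft_mem_decLabelings {p : ℕ × BT} (hp : p ∈ t.prunings) (hL : L ∈ p.2.decLabelings) :
    (L.map (· + 1)).graft p.1 1 ∈ t.decLabelings := by
  obtain ⟨hshape, hdec, hlab⟩ := BT.mem_decLabelings.mp hL
  refine BT.mem_decLabelings.mpr ⟨?_, isDec_graft (one_lt_of_mem_labels_map_add_one hL)
    (hdec.map fun _ _ _ _ h => Nat.add_lt_add_right h 1) _, ?_⟩
  · rw [shape_graft, shape_map, hshape, (BT.graft_of_mem_prunings hp).2]
  · rw [labels_graft, labels_map, hlab, ← BT.size_of_mem_prunings hp, map_add_one_range_succ]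

end GT

namespace BT

theorem lehmerSum_eq_sum_prunings {t : BT} (ht : t ≠ .leaf) :
    t.lehmerSum = (t.prunings.map fun p => X (p.1 + 1) * p.2.lehmerSum).sum := by
  classical
  obtain ⟨m, hm⟩ : ∃ m, t.size = m + 1 := by
    cases t with
    | leaf => exact absurd rfl ht
    | node l r => exact ⟨l.size + r.size, rfl⟩
  rw [← List.sum_toFinset _ t.nodup_prunings]
  simp only [lehmerSum, Finset.mul_sum]
  rw [Finset.sum_sigma']
  symm
  refine Finset.sum_nbij' (fun x => (x.2.map (· + 1)).graft x.1.1 1)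
    (fun L => ⟨(L.inorder.idxOf 1, L.eraseOne.shape), L.eraseOne.map (· - 1)⟩) ?_ ?_ ?_ ?_ ?_
  · rintro ⟨p, L⟩ h
    rw [Finset.mem_sigma, List.mem_toFinset] at h
    exact GT.graft_mem_decLabelings h.1 h.2
  · intro L hL
    rw [Finset.mem_sigma, List.mem_toFinset]
    exact ⟨GT.mem_prunings_of_mem_decLabelings hL hm,
      GT.map_sub_one_eraseOne_mem_decLabelings hL hm⟩
  · rintro ⟨p, L⟩ h
    obtain ⟨hp, hL⟩ : p ∈ t.prunings ∧ L ∈ p.2.decLabelings := by simpa using h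
    have h1 := GT.one_lt_of_mem_labels_map_add_one hL
    have hi := (graft_of_mem_prunings hp).1
    rw [← (mem_decLabelings.mp hL).1, GT.size_shape, ← GT.size_map (· + 1)] at hi
    dsimp only
    rw [GT.eraseOne_graft (fun h => lt_irrefl 1 (h1 1 h)),
      GT.idxOf_inorder_graft (fun h => lt_irrefl 1 (h1 1 h)) hi, GT.shape_map,
      (mem_decLabelings.mp hL).1, GT.map_map, GT.map_eq_self fun x _ => by simp]
  · intro L hL
    have htwo := GT.two_le_of_mem_labels_eraseOne hL hm
    simp only [GT.map_map]
    rw [GT.map_eq_self fun x hx => by have := htwo x hx; simp only [Function.comp_apply]; omega,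
      GT.graft_eraseOne_of_mem_decLabelings hL hm]
  · rintro ⟨p, L⟩ h
    obtain ⟨hp, hL⟩ : p ∈ t.prunings ∧ L ∈ p.2.decLabelings := by simpa using h
    dsimp only
    rw [← size_of_mem_prunings hp]
    exact (prod_codeInv_graft (mem_decLabelings.mp hL).2.2 (graft_of_mem_prunings hp).1).symm

theorem poly_one_eq_lehmerSum (t : BT) : t.poly 1 = t.lehmerSum := by
  induction hs : t.size using Nat.strong_induction_on generalizing t with
  | _ s ih =>
    by_cases ht : t = .leaf
    · subst ht
      simp [lehmerSum, decLabelings_leaf, poly, polyAux, size]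
    rw [poly_one_eq_sum_prunings ht, lehmerSum_eq_sum_prunings ht]
    refine congrArg List.sum (List.map_congr_left fun p hp => ?_)
    rw [ih p.2.size (by have := size_of_mem_prunings hp; omega) p.2 rfl]

end BT

theorem forest_poly_codes_general (n : ℕ) (t : BT) (ht : t.size = n - 1) :
    t.poly 1
      = ∑ᶠ L ∈ {L : GT ℕ | L.shape = t ∧ IsDec L ∧
            L.labels = (Multiset.range (n - 1)).map (· + 1)},
          ∏ i ∈ Finset.Icc 1 (n - 1),
            (MvPolynomial.X (codeInv L n i + 1) : MvPolynomial ℕ ℚ) := by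
  have hset : {L : GT ℕ | L.shape = t ∧ IsDec L ∧
      L.labels = (Multiset.range (n - 1)).map (· + 1)} = ↑t.decLabelings := by
    ext L
    simp [BT.mem_decLabelings, ht]
  rw [hset, finsum_mem_coe_finset, BT.poly_one_eq_lehmerSum, BT.lehmerSum, ht]
  simp only [codeInv, Nat.add_sub_cancel]

/-- for an indexed tree `T` with support `{1,…,n-1}`,
`β_T = Σ_{ℓ ∈ Dec(T)} ∏_{i=1}^{n-1} x_{c_i(ℓ⁻¹) + 1}` where the sum is over
decreasing labelings of `T` with labels exactly `{1,…,n-1}` and `c(ℓ⁻¹)` is the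
Lehmer code of the inverse of the inorder permutation `ℓ`. -/
theorem forest_poly_codes (n : ℕ) (hn : 1 ≤ n) (t : BT) (ht : t.size = n - 1) :
    t.poly 1
      = ∑ᶠ L ∈ {L : GT ℕ | L.shape = t ∧ IsDec L ∧
            L.labels = (Multiset.range (n - 1)).map (· + 1)},
          ∏ i ∈ Finset.Icc 1 (n - 1),
            (MvPolynomial.X (codeInv L n i + 1) : MvPolynomial ℕ ℚ) :=
  forest_poly_codes_general n t ht
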